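/- Multi-layer strong duality: for x ∈ X, choosing π_i* ∈ ∂f_i(f_{i+1:k}(x)) for i = k, k−1, …, 1 (where f_{i+1:k}(x) = f_{i+1}∘⋯∘f_k(x) and f_{k+1:k}(x) = x) yields L(π*_{1:k}; x) = f₁∘⋯∘f_k(x) + u(x). -/

import Mathlib

open Finset

/-- The partial composition of the layer functions: `compF k d f x j` is
`f_{k-j+1} ∘ ⋯ ∘ f_k (x)` (1-based paper indexing); at `j = k` it is the full
composition `f₁ ∘ ⋯ ∘ f_k (x)`. -/
noncomputable def compF (k : ℕ) (d : ℕ → ℕ)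
    (f : ∀ i, (Fin (d (i + 1)) → ℝ) → (Fin (d i) → ℝ))
    (x : Fin (d k) → ℝ) : ∀ j : ℕ, Fin (d (k - j)) → ℝ
  | 0 => x
  | (j + 1) =>
    if h : j + 1 ≤ k then
      f (k - (j + 1)) (fun b => compF k d f x j (Fin.cast (congrArg d (by omega)) b))
    else fun _ => 0

/-- `compAt k d f x i` is the inner composition `f_{i+1:k}(x)` viewed as a vector
indexed by `Fin (d (i+1))` (0-indexed layers; `compAt k d f x k = x` vacuously). -/
noncomputable def compAt (k : ℕ) (d : ℕ → ℕ)
    (f : ∀ i, (Fin (d (i + 1)) → ℝ) → (Fin (d i) → ℝ))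
    (x : Fin (d k) → ℝ) (i : ℕ) : Fin (d (i + 1)) → ℝ :=
  fun b =>
    if h : i + 1 ≤ k then
      compF k d f x (k - (i + 1)) (Fin.cast (congrArg d (by omega)) b)
    else 0

/-- The nested Lagrangian `L_i`: `L_{k+1} = x`,
`L_i(π_{i:k}, x) = π_i L_{i+1}(π_{i+1:k}, x) − f_i*(π_i)`. -/
noncomputable def nestedL (k : ℕ) (d : ℕ → ℕ)
    (π : ∀ i, Matrix (Fin (d i)) (Fin (d (i + 1))) ℝ)
    (fstar : ∀ i, Matrix (Fin (d i)) (Fin (d (i + 1))) ℝ → Fin (d i) → ℝ)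
    (x : Fin (d k) → ℝ) : ∀ j : ℕ, Fin (d (k - j)) → ℝ
  | 0 => x
  | (j + 1) =>
    if h : j + 1 ≤ k then
      fun a =>
        (∑ b : Fin (d (k - j)),
          π (k - (j + 1)) a (Fin.cast (congrArg d (by omega)) b) *
            nestedL k d π fstar x j b)
        - fstar (k - (j + 1)) (π (k - (j + 1))) a
    else fun _ => 0

/-! The Lagrangian is evaluated from the innermost layer outwards. If `L_{i+1}` already equals
`f_{i+1:k}(x)`, then `L_i = π_i f_{i+1:k}(x) − f_i*(π_i)`, and the Fenchel–Young equality for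
`π_i ∈ ∂f_i(f_{i+1:k}(x))` turns this into `f_i(f_{i+1:k}(x)) = f_{i:k}(x)`. -/

section

variable {k : ℕ} {d : ℕ → ℕ} {f : ∀ i, (Fin (d (i + 1)) → ℝ) → (Fin (d i) → ℝ)}
  {x : Fin (d k) → ℝ}

lemma compF_congr {j j' : ℕ} (h : j = j') (b : Fin (d (k - j))) :
    compF k d f x j b = compF k d f x j' (b.cast (by rw [h])) := by
  subst h; rfl

lemma compAt_sub_succ_eq_compF {j : ℕ} (hj : j + 1 ≤ k) (b : Fin (d (k - (j + 1) + 1))) :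
    compAt k d f x (k - (j + 1)) b = compF k d f x j (b.cast (congrArg d (by omega))) := by
  rw [compAt, dif_pos (by omega), compF_congr (show k - (k - (j + 1) + 1) = j by omega)]
  rfl

lemma nestedL_eq_compF {π : ∀ i, Matrix (Fin (d i)) (Fin (d (i + 1))) ℝ}
    {fstar : ∀ i, Matrix (Fin (d i)) (Fin (d (i + 1))) ℝ → Fin (d i) → ℝ}
    (hFY : ∀ i, i < k → ∀ a,
      fstar i (π i) a = (∑ b, π i a b * compAt k d f x i b) - f i (compAt k d f x i) a) :
    ∀ j, j ≤ k → nestedL k d π fstar x j = compF k d f x j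
  | 0, _ => rfl
  | j + 1, hj => by
    have hidx : k - (j + 1) + 1 = k - j := by omega
    have hinner : compAt k d f x (k - (j + 1)) =
        fun b => compF k d f x j (b.cast (congrArg d hidx)) :=
      funext (compAt_sub_succ_eq_compF hj)
    funext a
    rw [nestedL, compF, dif_pos hj, dif_pos hj, nestedL_eq_compF hFY j (by omega),
      hFY _ (by omega) a, hinner, ← Fin.sum_congr' _ (congrArg d hidx).symm]
    simp

end

theorem stmt_12_general (k : ℕ) (d : ℕ → ℕ)
    (f : ∀ i, (Fin (d (i + 1)) → ℝ) → (Fin (d i) → ℝ))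
    (u : (Fin (d k) → ℝ) → ℝ)
    (fstar : ∀ i, Matrix (Fin (d i)) (Fin (d (i + 1))) ℝ → Fin (d i) → ℝ)
    (x : Fin (d k) → ℝ)
    (π : ∀ i, Matrix (Fin (d i)) (Fin (d (i + 1))) ℝ)
    -- Fenchel–Young equality at the composition points (a consequence of the choice)
    (hFY : ∀ i, i < k → ∀ a,
      fstar i (π i) a =
        (∑ b, π i a b * compAt k d f x i b) - f i (compAt k d f x i) a) :
    ∀ a, nestedL k d π fstar x k a + u x = compF k d f x k a + u x := by
  intro a
  rw [nestedL_eq_compF hFY k le_rfl]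

/-- Multi-layer strong duality: choosing `π_i* ∈ ∂f_i(f_{i+1:k}(x))` for each layer
(encoded through the Fenchel–Young equalities at the composition points) yields
`L(π*_{1:k}; x) = f₁∘⋯∘f_k(x) + u(x)`. -/
theorem stmt_12 (k : ℕ) (d : ℕ → ℕ) (hd0 : d 0 = 1)
    (f : ∀ i, (Fin (d (i + 1)) → ℝ) → (Fin (d i) → ℝ))
    (u : (Fin (d k) → ℝ) → ℝ)
    (fstar : ∀ i, Matrix (Fin (d i)) (Fin (d (i + 1))) ℝ → Fin (d i) → ℝ)
    (x : Fin (d k) → ℝ)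
    (π : ∀ i, Matrix (Fin (d i)) (Fin (d (i + 1))) ℝ)
    -- π_i* ∈ ∂f_i(f_{i+1:k}(x)), componentwise
    (hsub : ∀ i, i < k → ∀ a (y' : Fin (d (i + 1)) → ℝ),
      f i y' a ≥ f i (compAt k d f x i) a +
        ∑ b, π i a b * (y' b - compAt k d f x i b))
    -- Fenchel–Young equality at the composition points (a consequence of the choice)
    (hFY : ∀ i, i < k → ∀ a,
      fstar i (π i) a =
        (∑ b, π i a b * compAt k d f x i b) - f i (compAt k d f x i) a) :
    ∀ a, nestedL k d π fstar x k a + u x = compF k d f x k a + u x :=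
  stmt_12_general k d f u fstar x π hFY
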